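/- Let d ≥ 1 and let s be a point of the unit sphere 𝕊^d ⊂ ℝ^{d+1} with −1 < s_{d+1} < 1. Set θ = s[1:d]/‖s[1:d]‖ ∈ 𝕊^{d−1} ⊂ ℝ^d and t = s_{d+1}/√(1 − s_{d+1}²). Then for every s' ∈ 𝕊^d with s'_{d+1} < 1, one has ⟨s', s⟩ = s_{d+1} if and only if ⟨φ(s'), θ⟩ = t. In other words, the stereographic projection maps the subsphere ζ₁^s = { s' ∈ 𝕊^d : ⟨s', s⟩ = s_{d+1} } bijectively onto the hyperplane { x ∈ ℝ^d : ⟨x, θ⟩ = t }. -/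

import Mathlib

open Real
open scoped RealInnerProductSpace

noncomputable section

/-- The first `d` coordinates of a point of `ℝ^{d+1}`, i.e. `s[1:d]`. -/
def stereoProj {d : ℕ} (s : EuclideanSpace ℝ (Fin (d + 1))) : EuclideanSpace ℝ (Fin d) :=
  WithLp.toLp 2 (fun i => s (Fin.castSucc i))

/-- The stereographic projection `φ(s) = s[1:d] / (1 - s_{d+1})`. -/
def stereo {d : ℕ} (s : EuclideanSpace ℝ (Fin (d + 1))) : EuclideanSpace ℝ (Fin d) :=
  (1 - s (Fin.last d))⁻¹ • stereoProj s

open Classical in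
/-- The map `h₁(x) = arccos((1 - ‖x‖²)/(1 + ‖x‖²)) • x/‖x‖` for `x ≠ 0`, `h₁(0) = 0`. -/
def h1 {d : ℕ} (x : EuclideanSpace ℝ (Fin d)) : EuclideanSpace ℝ (Fin d) :=
  if x = 0 then 0 else Real.arccos ((1 - ‖x‖ ^ 2) / (1 + ‖x‖ ^ 2)) • ‖x‖⁻¹ • x

/-- The north pole `s_n = (0, …, 0, 1)` of `𝕊^d ⊂ ℝ^{d+1}`. -/
def northPole (d : ℕ) : EuclideanSpace ℝ (Fin (d + 1)) :=
  EuclideanSpace.single (Fin.last d) 1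

/-- The south pole `s₀ = (0, …, 0, -1)` of `𝕊^d ⊂ ℝ^{d+1}`. -/
def southPole (d : ℕ) : EuclideanSpace ℝ (Fin (d + 1)) :=
  EuclideanSpace.single (Fin.last d) (-1)

end

/-!
Split `⟨s', s⟩ = ⟨s'[1:d], s[1:d]⟩ + s'_{d+1} s_{d+1}`. Since `‖s[1:d]‖ = √(1 - s_{d+1}²)`,
both conditions say `⟨s'[1:d], s[1:d]⟩ = s_{d+1} (1 - s'_{d+1})`: the first directly, the
second after clearing the positive factors `1 - s'_{d+1}` and `‖s[1:d]‖`.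
-/

section Stereographic

variable {d : ℕ}

theorem inner_eq_inner_stereoProj_add (x y : EuclideanSpace ℝ (Fin (d + 1))) :
    ⟪x, y⟫ = ⟪stereoProj x, stereoProj y⟫ + x (Fin.last d) * y (Fin.last d) := by
  simp only [PiLp.inner_apply, RCLike.inner_apply, conj_trivial, Fin.sum_univ_castSucc]
  rw [mul_comm (x _)]
  rfl

theorem norm_stereoProj_sq (x : EuclideanSpace ℝ (Fin (d + 1))) :
    ‖stereoProj x‖ ^ 2 = ‖x‖ ^ 2 - x (Fin.last d) ^ 2 := by
  rw [← real_inner_self_eq_norm_sq, ← real_inner_self_eq_norm_sq,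
    inner_eq_inner_stereoProj_add x x]
  ring

theorem sqrt_one_sub_sq_last_eq_norm_stereoProj {x : EuclideanSpace ℝ (Fin (d + 1))}
    (hx : ‖x‖ = 1) : √(1 - x (Fin.last d) ^ 2) = ‖stereoProj x‖ := by
  rw [← Real.sqrt_sq (norm_nonneg (stereoProj x)), norm_stereoProj_sq, hx, one_pow]

theorem inner_stereo_left (x : EuclideanSpace ℝ (Fin (d + 1))) (v : EuclideanSpace ℝ (Fin d)) :
    ⟪stereo x, v⟫ = (1 - x (Fin.last d))⁻¹ * ⟪stereoProj x, v⟫ :=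
  real_inner_smul_left _ _ _

end Stereographic

theorem stmt10_general {d : ℕ} (s : EuclideanSpace ℝ (Fin (d + 1)))
    (hs : ‖s‖ = 1) (hgt : -1 < s (Fin.last d)) (hlt : s (Fin.last d) < 1) :
    ∀ s' : EuclideanSpace ℝ (Fin (d + 1)), ‖s'‖ = 1 → s' (Fin.last d) < 1 →
      (⟪s', s⟫ = s (Fin.last d) ↔
        ⟪stereo s', ‖stereoProj s‖⁻¹ • stereoProj s⟫ =
          s (Fin.last d) / Real.sqrt (1 - s (Fin.last d) ^ 2)) := by
  intro s' _ hlt'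
  have hfactor : 0 < 1 - s' (Fin.last d) := by linarith
  have hnorm : 0 < ‖stereoProj s‖ := by
    rw [← sqrt_one_sub_sq_last_eq_norm_stereoProj hs, Real.sqrt_pos]
    nlinarith
  rw [inner_eq_inner_stereoProj_add, inner_stereo_left, real_inner_smul_right,
    sqrt_one_sub_sq_last_eq_norm_stereoProj hs]
  constructor
  · intro h
    field_simp
    linarith
  · intro h
    field_simp at h
    linarith

/-- for `s ∈ 𝕊^d` with `-1 < s_{d+1} < 1`, setting `θ = s[1:d]/‖s[1:d]‖` and
`t = s_{d+1}/√(1 - s_{d+1}²)`, the stereographic projection maps the subsphere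
`{s' ∈ 𝕊^d : ⟨s', s⟩ = s_{d+1}}` onto the hyperplane `{x : ⟨x, θ⟩ = t}`:
for every `s' ∈ 𝕊^d ∖ {s_n}`, `⟨s', s⟩ = s_{d+1} ↔ ⟨φ(s'), θ⟩ = t`. -/
theorem stmt10 {d : ℕ} (hd : 1 ≤ d) (s : EuclideanSpace ℝ (Fin (d + 1)))
    (hs : ‖s‖ = 1) (hgt : -1 < s (Fin.last d)) (hlt : s (Fin.last d) < 1) :
    ∀ s' : EuclideanSpace ℝ (Fin (d + 1)), ‖s'‖ = 1 → s' (Fin.last d) < 1 →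
      (⟪s', s⟫ = s (Fin.last d) ↔
        ⟪stereo s', ‖stereoProj s‖⁻¹ • stereoProj s⟫ =
          s (Fin.last d) / Real.sqrt (1 - s (Fin.last d) ^ 2)) :=
  stmt10_general s hs hgt hlt
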